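/- Let J be an n×n real matrix with zero diagonal such that B = (I − J)^{-1} exists and is a P-matrix, and let each f_i : X_i → R be concave on a convex set X_i ⊆ R^{k_i}. Then there exist strictly positive weights λ ∈ R^n_{++} such that the welfare function W(x) = λᵀ B f(x) is concave on Π X_i, and any x* that maximizes each f_i coordinatewise is a global maximizer of W. -/

import Mathlib

open Matrix Finset

section Aux
variable {ι : Type} [Fintype ι] [DecidableEq ι]



/-- all principal-type minors (along any injection) positive -/
def PMinors (A : Matrix ι ι ℝ) : Prop :=
  ∀ {κ : Type} [Fintype κ] [DecidableEq κ] (φ : κ → ι), Function.Injective φ →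
    0 < (A.submatrix φ φ).det

lemma PMinors.submatrix {A : Matrix ι ι ℝ} (hA : PMinors A)
    {κ : Type} [Fintype κ] [DecidableEq κ] (φ : κ → ι) (hφ : Function.Injective φ) :
    PMinors (A.submatrix φ φ) := by
  intro κ' _ _ ψ hψ
  have : (A.submatrix φ φ).submatrix ψ ψ = A.submatrix (φ ∘ ψ) (φ ∘ ψ) := rfl
  rw [this]
  exact hA _ (hφ.comp hψ)

lemma PMinors.transpose {A : Matrix ι ι ℝ} (hA : PMinors A) : PMinors Aᵀ := by
  intro κ _ _ φ hφ
  have : (Aᵀ).submatrix φ φ = (A.submatrix φ φ)ᵀ := rfl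
  rw [this, Matrix.det_transpose]
  exact hA φ hφ

/-- determinant of A + diagonal d is positive when d ≥ 0 and A has positive principal minors -/
lemma det_add_diagonal_pos {A : Matrix ι ι ℝ} (hA : PMinors A)
    {d : ι → ℝ} (hd : ∀ i, 0 ≤ d i) :
    0 < (A + Matrix.diagonal d).det := by
  classical
  have hrows : ((A + Matrix.diagonal d) : Matrix ι ι ℝ) =
      Matrix.of ((fun i => d i • (Pi.single i 1 : ι → ℝ)) + fun i => A i) := by
    ext i j
    by_cases h : i = j <;>
      simp [Matrix.diagonal, Pi.single_apply, h, eq_comm, mul_comm, add_comm]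
  have key : (A + Matrix.diagonal d).det =
      ∑ s : Finset ι, (∏ i ∈ s, d i) *
        (Matrix.of (s.piecewise (fun i => (Pi.single i 1 : ι → ℝ)) (fun i => A i))).det := by
    rw [hrows]
    have hdef : (Matrix.of ((fun i => d i • (Pi.single i 1 : ι → ℝ)) + fun i => A i)).det =
        (Matrix.detRowAlternating : (ι → ℝ) [⋀^ι]→ₗ[ℝ] ℝ).toMultilinearMap
          ((fun i => d i • (Pi.single i 1 : ι → ℝ)) + fun i => A i) := rfl
    rw [hdef, (Matrix.detRowAlternating : (ι → ℝ) [⋀^ι]→ₗ[ℝ] ℝ).toMultilinearMap.map_add_univ]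
    refine Finset.sum_congr rfl fun s _ => ?_
    have hpw : s.piecewise (fun i => d i • (Pi.single i 1 : ι → ℝ)) (fun i => A i) =
        s.piecewise (fun i => d i • (s.piecewise (fun i => (Pi.single i 1 : ι → ℝ)) (fun i => A i)) i)
          (s.piecewise (fun i => (Pi.single i 1 : ι → ℝ)) (fun i => A i)) := by
      funext i
      by_cases h : i ∈ s <;> simp [Finset.piecewise, h]
    rw [hpw, (Matrix.detRowAlternating : (ι → ℝ) [⋀^ι]→ₗ[ℝ] ℝ).toMultilinearMap.map_piecewise_smul]
    rw [smul_eq_mul]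
    rfl
  rw [key]
  have hterm : ∀ s : Finset ι,
      (Matrix.of (s.piecewise (fun i => (Pi.single i 1 : ι → ℝ)) (fun i => A i))).det =
        (A.submatrix (fun i : {i // ¬ i ∈ s} => (i : ι)) (fun i : {i // ¬ i ∈ s} => (i : ι))).det := by
    intro s
    set M := Matrix.of (s.piecewise (fun i => (Pi.single i 1 : ι → ℝ)) (fun i => A i)) with hM
    have h0 : ∀ i, (i ∈ s) → ∀ j, ¬ (j ∈ s) → M i j = 0 := by
      intro i hi j hj
      have : M i j = (Pi.single i 1 : ι → ℝ) j := by simp [hM, Finset.piecewise, hi]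
      rw [this, Pi.single_apply]
      have : j ≠ i := fun h => hj (h ▸ hi)
      simp [this]
    have := Matrix.twoBlockTriangular_det' M (fun i => i ∈ s) h0
    rw [this]
    have h1 : M.toSquareBlockProp (fun i => i ∈ s) = 1 := by
      ext i j
      have hi := i.2
      simp only [Matrix.toSquareBlockProp, Matrix.toBlock, Matrix.of_apply, hM]
      rw [Matrix.submatrix_apply, Matrix.of_apply, Finset.piecewise_eq_of_mem _ _ _ hi, Pi.single_apply, Matrix.one_apply]
      by_cases h : i = j
      · subst h; simp
      · have h' : (j : ι) ≠ i := fun e => h (Subtype.ext e.symm)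
        simp [h, h']
    have h2 : M.toSquareBlockProp (fun i => ¬ i ∈ s) =
        A.submatrix (fun i : {i // ¬ i ∈ s} => (i : ι)) (fun i : {i // ¬ i ∈ s} => (i : ι)) := by
      ext i j
      have hi := i.2
      simp [Matrix.toSquareBlockProp, Matrix.toBlock, hM, Finset.piecewise, hi]
    rw [h1, h2]
    simp
  have hpos : ∀ s : Finset ι, 0 ≤ (∏ i ∈ s, d i) *
      (Matrix.of (s.piecewise (fun i => (Pi.single i 1 : ι → ℝ)) (fun i => A i))).det := by
    intro s
    rw [hterm s]
    exact mul_nonneg (Finset.prod_nonneg fun i _ => hd i)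
      (le_of_lt (hA (fun i : {i // ¬ i ∈ s} => (i : ι)) Subtype.val_injective))
  refine Finset.sum_pos' (fun s _ => hpos s) ⟨∅, Finset.mem_univ _, ?_⟩
  rw [hterm ∅]
  simp only [Finset.prod_empty, one_mul]
  exact hA (fun i : {i // ¬ i ∈ (∅:Finset ι)} => (i : ι)) Subtype.val_injective





lemma PMinors.submatrix' {A : Matrix ι ι ℝ} (hA : PMinors A)
    {κ : Type} [Fintype κ] [DecidableEq κ] (φ : κ → ι) (hφ : Function.Injective φ) :
    PMinors (A.submatrix φ φ) := by
  intro κ' _ _ ψ hψ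
  have : (A.submatrix φ φ).submatrix ψ ψ = A.submatrix (φ ∘ ψ) (φ ∘ ψ) := rfl
  rw [this]
  exact hA _ (hφ.comp hψ)

/-- no nonzero nonneg vector has `N.mulVec y ≤ 0` when `N` has positive principal minors -/
lemma no_sign_reversal {N : Matrix ι ι ℝ} (hN : PMinors N)
    {y : ι → ℝ} (hy0 : ∀ i, 0 ≤ y i) (hNy : ∀ i, N.mulVec y i ≤ 0) : y = 0 := by
  classical
  by_contra hy
  have hex : ∃ i, y i ≠ 0 := by
    by_contra h
    push_neg at h
    exact hy (funext fun i => h i)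
  set s : Finset ι := Finset.univ.filter (fun i => y i ≠ 0) with hs
  haveI : Nonempty {i // i ∈ s} := by
    obtain ⟨i, hi⟩ := hex
    exact ⟨⟨i, by simp [hs, hi]⟩⟩
  set val : {i // i ∈ s} → ι := fun i => (i : ι) with hval
  have hvinj : Function.Injective val := Subtype.val_injective
  set A' := N.submatrix val val with hA'
  set d : {i // i ∈ s} → ℝ := fun i => -(N.mulVec y (val i)) / y (val i) with hd
  have hyspos : ∀ i : {i // i ∈ s}, 0 < y (val i) := by
    intro i
    exact lt_of_le_of_ne (hy0 _) (Ne.symm (Finset.mem_filter.mp i.2).2)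
  have hdpos : ∀ i, 0 ≤ d i := fun i =>
    div_nonneg (by linarith [hNy (val i)]) (le_of_lt (hyspos i))
  have hdet : 0 < (A' + Matrix.diagonal d).det :=
    det_add_diagonal_pos (hN.submatrix' val hvinj) hdpos
  have hker : (A' + Matrix.diagonal d).mulVec (fun i => y (val i)) = 0 := by
    funext i
    have hsum : ∑ j : {i // i ∈ s}, N (val i) (val j) * y (val j) = N.mulVec y (val i) := by
      rw [Finset.sum_coe_sort s (fun j => N (val i) j * y j)]
      rw [Matrix.mulVec, dotProduct]
      refine Finset.sum_subset (Finset.subset_univ s) ?_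
      intro j _ hj
      have : y j = 0 := by
        by_contra h
        exact hj (by simp [hs, h])
      simp [this]
    have : (A' + Matrix.diagonal d).mulVec (fun i => y (val i)) i =
        N.mulVec y (val i) + d i * y (val i) := by
      rw [Matrix.add_mulVec]
      simp only [Pi.add_apply, Matrix.mulVec_diagonal]
      congr 1
    rw [this, hd]
    have hne := (hyspos i).ne'
    field_simp
    simp
  have hunit : IsUnit (A' + Matrix.diagonal d) :=
    (Matrix.isUnit_iff_isUnit_det _).2 (isUnit_iff_ne_zero.2 (ne_of_gt hdet))
  have hinj := Matrix.mulVec_injective_iff_isUnit.2 hunit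
  have hzero : (fun i => y (val i)) = 0 := by
    apply hinj
    rw [hker, Matrix.mulVec_zero]
  obtain ⟨i0⟩ := (inferInstance : Nonempty {i // i ∈ s})
  have := congrFun hzero i0
  exact (hyspos i0).ne' this





lemma PMinors.transpose' {A : Matrix ι ι ℝ} (hA : PMinors A) : PMinors Aᵀ := by
  intro κ _ _ φ hφ
  have : (Aᵀ).submatrix φ φ = (A.submatrix φ φ)ᵀ := rfl
  rw [this, Matrix.det_transpose]
  exact hA φ hφ

/-- Semipositivity: a matrix with positive principal minors maps some positive vector
to a positive vector. -/
lemma pminors_semipositive {M : Matrix ι ι ℝ} (hM : PMinors M) :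
    ∃ lam : ι → ℝ, (∀ i, 0 < lam i) ∧ ∀ i, 0 < M.mulVec lam i := by
  classical
  cases isEmpty_or_nonempty ι with
  | inl h => exact ⟨fun _ => 1, fun i => h.elim i, fun i => h.elim i⟩
  | inr hne =>
  by_contra hcon
  push_neg at hcon
  -- s : open positive orthant, t : image of nonneg orthant under M
  set s : Set (ι → ℝ) := Set.univ.pi (fun _ => Set.Ioi (0:ℝ)) with hsdef
  set t : Set (ι → ℝ) := M.mulVec '' {x | ∀ i, 0 ≤ x i} with htdef
  have hs_eq : s = {v : ι → ℝ | ∀ i, 0 < v i} := by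
    ext v; simp [hsdef, Set.mem_pi]
  have hsconv : Convex ℝ s := convex_pi (fun i _ => convex_Ioi 0)
  have hsopen : IsOpen s := isOpen_set_pi Set.finite_univ (fun i _ => isOpen_Ioi)
  have htconv : Convex ℝ t := by
    have h1 : Convex ℝ {x : ι → ℝ | ∀ i, 0 ≤ x i} := by
      have : {x : ι → ℝ | ∀ i, 0 ≤ x i} = Set.univ.pi (fun _ => Set.Ici (0:ℝ)) := by
        ext v; simp [Set.mem_pi, Pi.le_def]
      rw [this]
      exact convex_pi (fun i _ => convex_Ici 0)
    exact h1.is_linear_image (Matrix.mulVecLin M).isLinear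
  have hdisj : Disjoint s t := by
    rw [Set.disjoint_left]
    rintro v hv ⟨x, hx, rfl⟩
    rw [hs_eq] at hv
    set w : ι → ℝ := M.mulVec (fun _ => 1) with hw
    set g : ι → ℝ := fun i => M.mulVec x i / (1 + |w i|) with hg
    obtain ⟨ε, hε, hεsmall⟩ : ∃ ε : ℝ, 0 < ε ∧ ∀ i, ε * |w i| < M.mulVec x i := by
      refine ⟨(Finset.univ.inf' Finset.univ_nonempty g) / 2, ?_, ?_⟩
      · apply div_pos _ two_pos
        apply Finset.lt_inf'_iff .. |>.2
        intro i _
        exact div_pos (hv i) (by positivity)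
      · intro i
        have h1 : Finset.univ.inf' Finset.univ_nonempty g ≤ g i :=
          Finset.inf'_le _ (Finset.mem_univ i)
        have h2 : (0:ℝ) < 1 + |w i| := by positivity
        have h3 : g i / 2 * (1 + |w i|) = M.mulVec x i / 2 := by
          rw [hg]; field_simp
        have h4 : 0 < g i := div_pos (hv i) h2
        nlinarith [abs_nonneg (w i), hv i]
    obtain ⟨i0, hi0⟩ := hcon (fun i => x i + ε) (fun i => by have := hx i; show (0:ℝ) < x i + ε; linarith)
    have heq : M.mulVec (fun i => x i + ε) = M.mulVec x + ε • w := by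
      have hxe : (fun i => x i + ε) = x + ε • (fun _ => (1:ℝ)) := by funext i; simp
      rw [hxe, Matrix.mulVec_add, Matrix.mulVec_smul]
    rw [heq] at hi0
    have h5 := hεsmall i0
    have h6 := neg_abs_le (w i0)
    simp only [Pi.add_apply, Pi.smul_apply, smul_eq_mul] at hi0
    nlinarith [abs_nonneg (w i0)]
  obtain ⟨f, u, hfs, hft⟩ := geometric_hahn_banach_open hsconv hsopen htconv hdisj
  -- u = 0
  have h0t : (0:ι → ℝ) ∈ t := ⟨0, fun i => le_refl 0, Matrix.mulVec_zero M⟩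
  have hu0 : u ≤ 0 := by simpa using hft 0 h0t
  have hone : ∀ ε : ℝ, 0 < ε → ε * f (fun _ => 1) < u := by
    intro ε hε
    have : (fun _ => ε : ι → ℝ) ∈ s := by rw [hs_eq]; exact fun i => hε
    have hf := hfs _ this
    have : (fun _ => ε : ι → ℝ) = ε • (fun _ => (1:ℝ)) := by funext i; simp
    rw [this, _root_.map_smul, smul_eq_mul] at hf
    exact hf
  have hf1neg : f (fun _ => 1) < 0 := by
    have := hone 1 one_pos
    rw [one_mul] at this
    linarith
  have hf1ne : (f fun _ => 1) ≠ 0 := ne_of_lt hf1neg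
  have huge0 : 0 ≤ u := by
    by_contra h
    push_neg at h
    have hε : 0 < u / (2 * f (fun _ => 1)) := div_pos_of_neg_of_neg h (by linarith)
    have h3 := hone _ hε
    have h4 : u / (2 * f (fun _ => 1)) * (f fun _ => 1) = u / 2 := by
      field_simp
    rw [h4] at h3
    linarith
  have hu : u = 0 := le_antisymm hu0 huge0
  -- y i := - f (single i 1) is nonneg
  set y : ι → ℝ := fun i => -f (Pi.single i 1) with hy
  have hynn : ∀ i, 0 ≤ y i := by
    intro i
    by_contra h
    push_neg at h
    have hc : 0 < f (Pi.single i 1) := by simp [hy] at h; linarith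
    set ε := f (Pi.single i 1) / (-2 * f (fun _ => 1)) with hε
    have hεpos : 0 < ε := div_pos hc (by linarith)
    have hmem : (Pi.single i 1 + fun _ => ε : ι → ℝ) ∈ s := by
      rw [hs_eq]
      intro j
      simp only [Pi.add_apply]
      rcases eq_or_ne j i with rfl | hne
      · simp [Pi.single_apply]; linarith
      · simp [Pi.single_apply, hne]; linarith
    have hlt := hfs _ hmem
    rw [hu] at hlt
    have : f (Pi.single i 1 + fun _ => ε) = f (Pi.single i 1) + ε * f (fun _ => 1) := by
      rw [map_add]
      congr 1
      have : (fun _ => ε : ι → ℝ) = ε • (fun _ => (1:ℝ)) := by funext j; simp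
      rw [this, _root_.map_smul, smul_eq_mul]
    rw [this] at hlt
    have : ε * f (fun _ => 1) = -f (Pi.single i 1) / 2 := by
      rw [hε]
      field_simp
    rw [this] at hlt
    linarith
  -- f v = -⟨y, v⟩
  have hfv : ∀ v : ι → ℝ, f v = -∑ i, v i * y i := by
    intro v
    have hv : v = ∑ i, v i • (Pi.single i 1 : ι → ℝ) := by
      funext j
      rw [Fintype.sum_apply]
      simp [Pi.single_apply]
    conv_lhs => rw [hv]
    rw [map_sum]
    simp only [_root_.map_smul, smul_eq_mul, hy]
    rw [← Finset.sum_neg_distrib]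
    congr 1
    funext i
    ring
  -- Mᵀ y ≤ 0
  have hMty : ∀ j, Mᵀ.mulVec y j ≤ 0 := by
    intro j
    have hmem : M.mulVec (Pi.single j 1) ∈ t :=
      ⟨Pi.single j 1, fun i => by simp [Pi.single_apply]; split <;> norm_num, rfl⟩
    have := hft _ hmem
    rw [hu, hfv] at this
    have h2 : ∑ i, M.mulVec (Pi.single j 1) i * y i = Mᵀ.mulVec y j := by
      simp only [Matrix.mulVec, dotProduct, Matrix.transpose_apply]
      refine Finset.sum_congr rfl fun i0 _ => ?_
      have hinner : (∑ l, M i0 l * (Pi.single j 1 : ι → ℝ) l) = M i0 j := by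
        simp [Pi.single_apply]
      rw [hinner]
    rw [h2] at this
    linarith
  -- contradiction via no_sign_reversal on Mᵀ
  have hy0 := no_sign_reversal hM.transpose' hynn hMty
  have : f (fun _ => 1) = 0 := by
    rw [hfv]
    simp [hy0]
  linarith

end Aux

/-- A square real matrix is a P-matrix if all of its principal minors are positive. -/
def IsPMatrix {n : ℕ} (A : Matrix (Fin n) (Fin n) ℝ) : Prop :=
  ∀ S : Finset (Fin n), S.Nonempty →
    0 < (A.submatrix (fun i : S => (i : Fin n)) (fun j : S => (j : Fin n))).det

lemma IsPMatrix.pminors {n : ℕ} {A : Matrix (Fin n) (Fin n) ℝ} (hA : IsPMatrix A) :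
    PMinors A := by
  intro κ _ _ φ hφ
  cases isEmpty_or_nonempty κ with
  | inl h => simpa using (Matrix.det_isEmpty (A := A.submatrix φ φ)) ▸ one_pos
  | inr hne =>
    classical
    set T : Finset (Fin n) := Finset.univ.image φ with hT
    have hTne : T.Nonempty := by
      obtain ⟨a⟩ := hne
      exact ⟨φ a, by simp [hT]⟩
    let e : κ ≃ {i // i ∈ T} :=
      Equiv.ofBijective (fun a => ⟨φ a, by simp [hT]⟩)
        ⟨fun a b hab => hφ (congrArg Subtype.val hab), by
          rintro ⟨i, hi⟩
          rw [hT, Finset.mem_image] at hi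
          obtain ⟨a, -, ha⟩ := hi
          exact ⟨a, Subtype.ext ha⟩⟩
    have heq : A.submatrix φ φ =
        (A.submatrix (fun i : T => (i : Fin n)) (fun j : T => (j : Fin n))).submatrix e e := by
      ext a b
      rfl
    rw [heq, Matrix.det_submatrix_equiv_self]
    exact hA T hTne

/-- With B = (I−J)⁻¹ a P-matrix and concave base utilities, there exist strictly positive
welfare weights λ such that W(x) = λᵀ B f(x) is concave, and any coordinatewise base
maximizer globally maximizes W. -/
theorem exists_concave_welfare {n : ℕ} (k : Fin n → ℕ)
    (J : Matrix (Fin n) (Fin n) ℝ)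
    (hdiag : ∀ i, J i i = 0) (hunit : IsUnit (1 - J).det)
    (hP : IsPMatrix (1 - J)⁻¹)
    (X : ∀ i, Set (EuclideanSpace ℝ (Fin (k i)))) (hconv : ∀ i, Convex ℝ (X i))
    (f : ∀ i, EuclideanSpace ℝ (Fin (k i)) → ℝ)
    (hconc : ∀ i, ConcaveOn ℝ (X i) (f i)) :
    ∃ lam : Fin n → ℝ, (∀ i, 0 < lam i) ∧
      ConcaveOn ℝ {x : ∀ i, EuclideanSpace ℝ (Fin (k i)) | ∀ i, x i ∈ X i}
        (fun x => ∑ i, lam i * (1 - J)⁻¹.mulVec (fun j => f j (x j)) i) ∧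
      ∀ xs : ∀ i, EuclideanSpace ℝ (Fin (k i)), (∀ i, xs i ∈ X i) →
        (∀ (i : Fin n), ∀ xi ∈ X i, f i xi ≤ f i (xs i)) →
        ∀ x : ∀ i, EuclideanSpace ℝ (Fin (k i)), (∀ i, x i ∈ X i) →
          (∑ i, lam i * (1 - J)⁻¹.mulVec (fun j => f j (x j)) i) ≤
            ∑ i, lam i * (1 - J)⁻¹.mulVec (fun j => f j (xs j)) i := by
  classical
  set B : Matrix (Fin n) (Fin n) ℝ := (1 - J)⁻¹ with hB
  have hPB : PMinors B := hP.pminors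
  obtain ⟨lam, hlam, hmul⟩ := pminors_semipositive hPB.transpose'
  set μ : Fin n → ℝ := fun j => Bᵀ.mulVec lam j with hμdef
  have hrw : ∀ F : Fin n → ℝ, (∑ i, lam i * B.mulVec F i) = ∑ j, μ j * F j := by
    intro F
    simp only [hμdef, Matrix.mulVec, dotProduct, Matrix.transpose_apply, Finset.mul_sum,
      Finset.sum_mul]
    rw [Finset.sum_comm]
    refine Finset.sum_congr rfl fun j _ => Finset.sum_congr rfl fun i _ => by ring
  have hWeq : (fun x : ∀ i, EuclideanSpace ℝ (Fin (k i)) =>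
      ∑ i, lam i * B.mulVec (fun j => f j (x j)) i) =
      fun x => ∑ j, μ j * f j (x j) := funext fun x => hrw _
  have hSconv : Convex ℝ {x : ∀ i, EuclideanSpace ℝ (Fin (k i)) | ∀ i, x i ∈ X i} := by
    have h := convex_pi (𝕜 := ℝ) (s := (Set.univ : Set (Fin n))) (t := X) (fun i _ => hconv i)
    convert h using 1
    ext x
    simp [Set.mem_pi]
  refine ⟨lam, hlam, ?_, ?_⟩
  · rw [show (fun x : ∀ i, EuclideanSpace ℝ (Fin (k i)) =>
        ∑ i, lam i * (1 - J)⁻¹.mulVec (fun j => f j (x j)) i) =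
        fun x => ∑ j, μ j * f j (x j) from hWeq]
    refine ⟨hSconv, ?_⟩
    intro x hx y hy a b ha hb hab
    simp only [smul_eq_mul, Finset.mul_sum, ← Finset.sum_add_distrib]
    refine Finset.sum_le_sum fun j _ => ?_
    have h := (hconc j).2 (hx j) (hy j) ha hb hab
    simp only [smul_eq_mul] at h
    have hμ : (0:ℝ) ≤ μ j := le_of_lt (hmul j)
    have hxy : (a • x + b • y) j = a • x j + b • y j := rfl
    rw [hxy]
    nlinarith [mul_le_mul_of_nonneg_left h hμ]
  · intro xs hxs hmax x hx
    rw [hrw, hrw]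
    refine Finset.sum_le_sum fun j _ => ?_
    exact mul_le_mul_of_nonneg_left (hmax j (x j) (hx j)) (le_of_lt (hmul j))
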